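/- arXiv:1301.7742 — 5 statements merged into one kernel-verified Lean document; each statement's English description precedes it below -/
import Mathlib

section
/- Let T̃ > 0 and M > 0. There exists T > 0, depending only on T̃ and M, with the following property: for every function f analytic on the disk D_{T̃} := {t ∈ ℂ : |t| < T̃} satisfying f(0) = 0, f′(0) = 1, |f(t)| ≤ M for all t ∈ D_{T̃}, and Re f(t) = 0 for every t ∈ D_{T̃} with Re t = 0, one has Re f(t) > 0 for every t ∈ D_T := {t ∈ ℂ : |t| < T} with Re t > 0. -/
/-!
Cauchy's estimate bounds `f'` by `4M/T̃` on `D_{T̃/2}`, and the Schwarz lemma applied to `f'`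
then gives `|f'(s) - 1| ≤ 16 M |s| / T̃²`, so `|f' - 1| ≤ 1/2` on a small disk `D_T`.
For `t ∈ D_T` with `Re t > 0`, the point `w = i Im t` lies on the imaginary axis, so
`Re f(w) = 0`, and the mean value inequality along the horizontal segment from `w` to `t`
gives `Re f(t) ≥ Re t / 2 > 0`.
-/

open Metric Set Complex

section CauchyEstimates

variable {E : Type*} [NormedAddCommGroup E] [NormedSpace ℂ E] {f : ℂ → E} {c s : ℂ} {R M : ℝ}

theorem norm_deriv_le_of_forall_norm_le (hf : DifferentiableOn ℂ f (ball c R))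
    (hM : ∀ z ∈ ball c R, ‖f z‖ ≤ M) (hs : s ∈ ball c (R / 2)) :
    ‖deriv f s‖ ≤ 4 * M / R := by
  have hsub : ball s (R / 2) ⊆ ball c R := ball_half_subset s hs
  have hmaps : MapsTo f (ball s (R / 2)) (closedBall (f s) (2 * M)) := fun z hz => by
    rw [mem_closedBall, dist_eq_norm]
    linarith [norm_sub_le (f z) (f s), hM z (hsub hz),
      hM s (hsub (mem_ball_self (pos_of_mem_ball hs)))]
  calc ‖deriv f s‖ ≤ 2 * M / (R / 2) :=
        norm_deriv_le_div_of_mapsTo_ball (hf.mono hsub) hmaps (pos_of_mem_ball hs)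
    _ = 4 * M / R := by ring

theorem dist_deriv_le_of_forall_norm_le [CompleteSpace E] (hf : DifferentiableOn ℂ f (ball c R))
    (hM : ∀ z ∈ ball c R, ‖f z‖ ≤ M) (hs : s ∈ ball c (R / 2)) :
    dist (deriv f s) (deriv f c) ≤ 16 * M / R ^ 2 * dist s c := by
  have hf' : DifferentiableOn ℂ (deriv f) (ball c (R / 2)) :=
    (hf.deriv isOpen_ball).mono (ball_subset_ball (by linarith [pos_of_mem_ball hs]))
  have hmaps : MapsTo (deriv f) (ball c (R / 2)) (closedBall (deriv f c) (8 * M / R)) :=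
    fun z hz => by
      rw [mem_closedBall, dist_eq_norm, show 8 * M / R = 4 * M / R + 4 * M / R by ring]
      linarith [norm_sub_le (deriv f z) (deriv f c), norm_deriv_le_of_forall_norm_le hf hM hz,
        norm_deriv_le_of_forall_norm_le hf hM (mem_ball_self (pos_of_mem_ball hs))]
  calc dist (deriv f s) (deriv f c) ≤ 8 * M / R / (R / 2) * dist s c :=
        dist_le_div_mul_dist_of_mapsTo_ball hf' hmaps hs
    _ = 16 * M / R ^ 2 * dist s c := by ring

end CauchyEstimates

theorem re_lt_re_image_add_ofReal {f : ℂ → ℂ} {U : Set ℂ} (hU : Convex ℝ U)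
    (hf : ∀ z ∈ U, DifferentiableAt ℂ f z) (hf' : ∀ z ∈ U, ‖deriv f z - 1‖ ≤ 1 / 2)
    {w : ℂ} {x : ℝ} (hw : w ∈ U) (hwx : w + x ∈ U) (hx : 0 < x) :
    (f w).re < (f (w + x)).re := by
  have hmv : ‖(f (w + x) - (w + x)) - (f w - w)‖ ≤ 1 / 2 * ‖(w + x) - w‖ := by
    refine hU.norm_image_sub_le_of_norm_deriv_le (f := fun z => f z - z)
      (fun z hz => (hf z hz).sub differentiableAt_id) (fun z hz => ?_) hw hwx
    rw [deriv_fun_sub (hf z hz) differentiableAt_fun_id, deriv_id'']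
    exact hf' z hz
  have hre := (abs_le.mp ((abs_re_le_norm _).trans hmv)).1
  simp only [add_sub_cancel_left, norm_real, Real.norm_of_nonneg hx.le, sub_re, add_re,
    ofReal_re] at hre
  linarith

/-- Given `T̃ > 0` and `M > 0`, there is `T > 0`, depending only on `T̃`
and `M`, such that every analytic `f` on the disk `D_{T̃}` with `f(0) = 0`, `f′(0) = 1`,
`|f| ≤ M`, and mapping the imaginary axis (inside the disk) to the imaginary axis, maps
points of `D_T` with positive real part to points with positive real part. -/
theorem stmt5 (T' M : ℝ) (hT' : 0 < T') (hM : 0 < M) :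
    ∃ T > 0, ∀ f : ℂ → ℂ,
      DifferentiableOn ℂ f (Metric.ball (0 : ℂ) T') →
      f 0 = 0 →
      deriv f 0 = 1 →
      (∀ t ∈ Metric.ball (0 : ℂ) T', ‖f t‖ ≤ M) →
      (∀ t ∈ Metric.ball (0 : ℂ) T', t.re = 0 → (f t).re = 0) →
      ∀ t : ℂ, ‖t‖ < T → 0 < t.re → 0 < (f t).re := by
  set T := min (T' / 2) (T' ^ 2 / (32 * M))
  have hTT' : ball (0 : ℂ) T ⊆ ball 0 (T' / 2) := ball_subset_ball (min_le_left _ _)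
  refine ⟨T, by positivity, fun f hf _ hf'0 hfM hfim t ht htre => ?_⟩
  have hdiff : ∀ z ∈ ball (0 : ℂ) T, DifferentiableAt ℂ f z := fun z hz =>
    hf.differentiableAt (isOpen_ball.mem_nhds (ball_subset_ball (by linarith) (hTT' hz)))
  have hderiv : ∀ z ∈ ball (0 : ℂ) T, ‖deriv f z - 1‖ ≤ 1 / 2 := fun z hz => by
    have h := dist_deriv_le_of_forall_norm_le hf hfM (hTT' hz)
    rw [hf'0, dist_eq_norm, dist_zero_right] at h
    calc ‖deriv f z - 1‖ ≤ 16 * M / T' ^ 2 * ‖z‖ := h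
      _ ≤ 16 * M / T' ^ 2 * (T' ^ 2 / (32 * M)) := by
        gcongr; exact (mem_ball_zero_iff.mp hz).le.trans (min_le_right _ _)
      _ = 1 / 2 := by field_simp; ring
  set w : ℂ := t.im * I
  have hwt : w + t.re = t := by simp [w, Complex.ext_iff]
  have hw : w ∈ ball (0 : ℂ) T := by
    rw [mem_ball_zero_iff]
    simpa [w] using (abs_im_le_norm t).trans_lt ht
  have hfw : (f w).re = 0 :=
    hfim w (ball_subset_ball (by linarith) (hTT' hw)) (by simp [w])
  have hwt_mem : w + t.re ∈ ball (0 : ℂ) T := by rwa [hwt, mem_ball_zero_iff]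
  have := re_lt_re_image_add_ofReal (convex_ball 0 T) hdiff hderiv hw hwt_mem htre
  rwa [hwt, hfw] at this
end

section
/- There exists δ > 0 such that for every ω, t ∈ ℂ with 0 < |ωt| < δ, every s ∈ [0,1] and every x, y ∈ ℂ^ν, one has |q_ω(s)| ≤ 4 max(|x|, |y|), where q_ω(s) := (sh(ωts) x + sh(ωt(1−s)) y)/sh(ωt). -/
/-!
For small `z`, `sinh z` is `z` up to a relative error of `1/4`, so for `‖w‖ ≤ ‖z‖ ≤ 1/4` the
quotient `sinh w / sinh z` has norm at most `(5/4) / (3/4) ≤ 2`. Both coefficients of `q_ω(s)` are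
of this form, with `z = ωt` and `w = ωts` or `w = ωt(1 - s)`.
-/

open Complex

theorem Complex.norm_sinh_sub_self_le {z : ℂ} (hz : ‖z‖ ≤ 1) : ‖sinh z - z‖ ≤ ‖z‖ ^ 2 := by
  have hsplit : sinh z - z = ((exp z - 1 - z) - (exp (-z) - 1 - -z)) / 2 := by
    rw [sinh]; ring
  have hneg : ‖-z‖ ≤ 1 := by rwa [norm_neg]
  calc ‖sinh z - z‖ ≤ (‖exp z - 1 - z‖ + ‖exp (-z) - 1 - -z‖) / 2 := by
        rw [hsplit, norm_div, RCLike.norm_ofNat]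
        gcongr
        exact norm_sub_le _ _
    _ ≤ (‖z‖ ^ 2 + ‖-z‖ ^ 2) / 2 := by
        gcongr
        exacts [norm_exp_sub_one_sub_id_le hz, norm_exp_sub_one_sub_id_le hneg]
    _ = ‖z‖ ^ 2 := by rw [norm_neg]; ring

theorem Complex.norm_sinh_div_sinh_le_two {z w : ℂ} (hz : ‖z‖ ≤ 1 / 4) (hwz : ‖w‖ ≤ ‖z‖) :
    ‖sinh w / sinh z‖ ≤ 2 := by
  have hw : ‖w‖ ≤ 1 / 4 := hwz.trans hz
  have hz_err : ‖sinh z - z‖ ≤ ‖z‖ / 4 :=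
    (norm_sinh_sub_self_le (by linarith)).trans (by nlinarith [norm_nonneg z])
  have hw_err : ‖sinh w - w‖ ≤ ‖w‖ / 4 :=
    (norm_sinh_sub_self_le (by linarith)).trans (by nlinarith [norm_nonneg w])
  have hz_lower : 3 / 4 * ‖z‖ ≤ ‖sinh z‖ := by
    have := norm_sub_norm_le z (z - sinh z)
    rw [sub_sub_cancel, norm_sub_rev] at this
    linarith
  have hw_upper : ‖sinh w‖ ≤ 5 / 4 * ‖w‖ := by
    have := norm_le_norm_add_norm_sub' (sinh w) w
    linarith
  rw [norm_div]
  exact div_le_of_le_mul₀ (norm_nonneg _) zero_le_two (by linarith [norm_nonneg z])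

theorem norm_smul_add_smul_le {𝕜 E : Type*} [NormedField 𝕜] [SeminormedAddCommGroup E]
    [NormedSpace 𝕜 E] {a b : 𝕜} {C : ℝ} (ha : ‖a‖ ≤ C) (hb : ‖b‖ ≤ C) (x y : E) :
    ‖a • x + b • y‖ ≤ 2 * C * max ‖x‖ ‖y‖ := by
  have hC : 0 ≤ C := (norm_nonneg a).trans ha
  calc ‖a • x + b • y‖ ≤ ‖a‖ * ‖x‖ + ‖b‖ * ‖y‖ := by
        rw [← norm_smul, ← norm_smul]
        exact norm_add_le _ _
    _ ≤ C * max ‖x‖ ‖y‖ + C * max ‖x‖ ‖y‖ := by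
        gcongr
        exacts [le_max_left _ _, le_max_right _ _]
    _ = 2 * C * max ‖x‖ ‖y‖ := by ring

/-- There exists `δ > 0` such that for all `ω, t ∈ ℂ` with
`0 < |ωt| < δ`, all `s ∈ [0,1]` and all `x, y ∈ ℂ^ν`, the path
`q_ω(s) = (sh(ωts) x + sh(ωt(1−s)) y)/sh(ωt)` satisfies `|q_ω(s)| ≤ 4 max(|x|,|y|)`. -/
theorem stmt8 (ν : ℕ) :
    ∃ δ > (0 : ℝ), ∀ ω t : ℂ, 0 < ‖ω * t‖ → ‖ω * t‖ < δ →
      ∀ s ∈ Set.Icc (0 : ℝ) 1, ∀ x y : EuclideanSpace ℂ (Fin ν),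
        ‖(Complex.sinh (ω * t * (s : ℂ)) / Complex.sinh (ω * t)) • x
            + (Complex.sinh (ω * t * (1 - (s : ℂ))) / Complex.sinh (ω * t)) • y‖
          ≤ 4 * max ‖x‖ ‖y‖ := by
  refine ⟨1 / 4, by norm_num, fun ω t _ hsmall s ⟨hs0, hs1⟩ x y => ?_⟩
  have hscale : ∀ r : ℝ, 0 ≤ r → r ≤ 1 → ‖ω * t * (r : ℂ)‖ ≤ ‖ω * t‖ := fun r hr0 hr1 => by
    rw [norm_mul, norm_real, Real.norm_of_nonneg hr0]
    exact mul_le_of_le_one_right (norm_nonneg _) hr1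
  have h1 := norm_sinh_div_sinh_le_two hsmall.le (hscale s hs0 hs1)
  have h2 := norm_sinh_div_sinh_le_two hsmall.le (hscale (1 - s) (by linarith) (by linarith))
  push_cast at h2
  simpa only [show (2 : ℝ) * 2 = 4 by norm_num] using norm_smul_add_smul_le h1 h2 x y
end

section
/- Let ν ≥ 1, ω > 0 and y ∈ ℝ^ν. Define u_ω : (0,∞) × ℝ^ν → ℝ by u_ω(t,x) := (4π sh(ωt)/ω)^{−ν/2} exp( −(ω/(4 sh(ωt))) ( ch(ωt)(|x|² + |y|²) − 2 x·y ) ). Then u_ω satisfies the harmonic-oscillator heat equation ∂_t u_ω(t,x) = Δ_x u_ω(t,x) − (ω²/4) |x|² u_ω(t,x) for every t > 0 and x ∈ ℝ^ν (Mehler's formula). -/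
open Finset Real

/-
Mehler's formula is a direct computation. For fixed `t`, the kernel is a Gaussian in `x` with
separable exponent, so along each coordinate line it has the form `K exp (a z² + b z + C)`, whose
second derivative is `(2a + (2az + b)²)` times itself. In `t` the kernel is a power of `sh (ωt)`
times an exponential. Both sides of the equation are therefore the kernel multiplied by an explicit
rational function of `sh (ωt)`, `ch (ωt)`, `|x|²`, `|y|²`, `x·y`, and the two factors agree by
`ch² − sh² = 1`.
-/

lemma hasDerivAt_mul_exp_quadratic (K a b c z : ℝ) :
    HasDerivAt (fun z => K * exp (a * z ^ 2 + b * z + c))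
      ((2 * a * z + b) * (K * exp (a * z ^ 2 + b * z + c))) z := by
  have hq : HasDerivAt (fun z : ℝ => a * z ^ 2 + b * z + c) (2 * a * z + b) z := by
    simpa using (((hasDerivAt_pow 2 z).const_mul a).add ((hasDerivAt_id z).const_mul b)).add_const c
      |>.congr_deriv (by ring)
  exact (hq.exp.const_mul K).congr_deriv (by ring)

lemma iteratedDeriv_two_mul_exp_quadratic (K a b c w : ℝ) :
    iteratedDeriv 2 (fun z => K * exp (a * z ^ 2 + b * z + c)) w
      = (2 * a + (2 * a * w + b) ^ 2) * (K * exp (a * w ^ 2 + b * w + c)) := by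
  have hderiv : deriv (fun z => K * exp (a * z ^ 2 + b * z + c))
      = fun z => (2 * a * z + b) * (K * exp (a * z ^ 2 + b * z + c)) :=
    funext fun z => (hasDerivAt_mul_exp_quadratic K a b c z).deriv
  rw [iteratedDeriv_succ, iteratedDeriv_one, hderiv]
  exact ((((hasDerivAt_id w).const_mul (2 * a)).add_const b).mul
    (hasDerivAt_mul_exp_quadratic K a b c w)).deriv.trans (by simp only [id_eq]; ring)

lemma Fintype.sum_apply_update {ι α M : Type*} [Fintype ι] [DecidableEq ι] [AddCommGroup M]
    (g : ι → α → M) (x : ι → α) (i : ι) (z : α) :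
    ∑ j, g j (Function.update x i z j) = ∑ j, g j (x j) - g i (x i) + g i z := by
  rw [Fintype.sum_eq_add_sum_compl i, Fintype.sum_eq_add_sum_compl i (fun j => g j (x j)),
    Function.update_self]
  have hrest : ∑ j ∈ {i}ᶜ, g j (Function.update x i z j) = ∑ j ∈ {i}ᶜ, g j (x j) :=
    Finset.sum_congr rfl fun j hj => by rw [Function.update_of_ne (by simpa using hj)]
  rw [hrest]
  abel

section Mehler

variable {ν : ℕ} (ω : ℝ) (y : Fin ν → ℝ)

noncomputable def mehlerExponent (t : ℝ) (x : Fin ν → ℝ) : ℝ :=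
  -(ω / (4 * sinh (ω * t))) *
    (cosh (ω * t) * ((∑ i, x i ^ 2) + ∑ i, y i ^ 2) - 2 * ∑ i, x i * y i)

noncomputable def mehlerKernel (t : ℝ) (x : Fin ν → ℝ) : ℝ :=
  (4 * π * sinh (ω * t) / ω) ^ (-(ν : ℝ) / 2) * exp (mehlerExponent ω y t x)

lemma mehlerExponent_update (t : ℝ) (x : Fin ν → ℝ) (i : Fin ν) (z : ℝ) :
    mehlerExponent ω y t (Function.update x i z)
      = -(ω * cosh (ω * t) / (4 * sinh (ω * t))) * z ^ 2 + ω * y i / (2 * sinh (ω * t)) * z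
        + (mehlerExponent ω y t x + ω * cosh (ω * t) / (4 * sinh (ω * t)) * x i ^ 2
          - ω * y i / (2 * sinh (ω * t)) * x i) := by
  simp only [mehlerExponent, Fintype.sum_apply_update (fun _ w => w ^ 2),
    Fintype.sum_apply_update (fun j w => w * y j)]
  ring

lemma iteratedDeriv_two_mehlerKernel_update (t : ℝ) (x : Fin ν → ℝ) (i : Fin ν) :
    iteratedDeriv 2 (fun z => mehlerKernel ω y t (Function.update x i z)) (x i)
      = (-(ω * cosh (ω * t)) / (2 * sinh (ω * t))
          + (ω / (2 * sinh (ω * t))) ^ 2 * (y i - cosh (ω * t) * x i) ^ 2)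
        * mehlerKernel ω y t x := by
  simp only [mehlerKernel, mehlerExponent_update]
  rw [iteratedDeriv_two_mul_exp_quadratic]
  congr 1
  · ring
  · congr 2; ring

lemma laplacian_mehlerKernel (t : ℝ) (x : Fin ν → ℝ) :
    ∑ i, iteratedDeriv 2 (fun z => mehlerKernel ω y t (Function.update x i z)) (x i)
      = (-(ν * ω * cosh (ω * t)) / (2 * sinh (ω * t))
          + (ω / (2 * sinh (ω * t))) ^ 2 * (cosh (ω * t) ^ 2 * ∑ i, x i ^ 2
            - 2 * cosh (ω * t) * ∑ i, x i * y i + ∑ i, y i ^ 2))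
        * mehlerKernel ω y t x := by
  have hsq : ∀ i, (y i - cosh (ω * t) * x i) ^ 2
      = cosh (ω * t) ^ 2 * x i ^ 2 - 2 * cosh (ω * t) * (x i * y i) + y i ^ 2 := fun i => by ring
  simp only [iteratedDeriv_two_mehlerKernel_update, ← sum_mul, hsq, sum_add_distrib,
    sum_sub_distrib, ← mul_sum, sum_const, card_univ, Fintype.card_fin, nsmul_eq_mul]
  ring

lemma hasDerivAt_mehlerExponent {t : ℝ} (hs : sinh (ω * t) ≠ 0) (x : Fin ν → ℝ) :
    HasDerivAt (fun t => mehlerExponent ω y t x)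
      (ω ^ 2 * ((∑ i, x i ^ 2) + (∑ i, y i ^ 2) - 2 * cosh (ω * t) * ∑ i, x i * y i)
        / (4 * sinh (ω * t) ^ 2)) t := by
  have hωt : HasDerivAt (fun t => ω * t) ω t := by simpa using (hasDerivAt_id t).const_mul ω
  have hcoef : HasDerivAt (fun t => -(ω / (4 * sinh (ω * t))))
      (ω ^ 2 * cosh (ω * t) / (4 * sinh (ω * t) ^ 2)) t := by
    refine ((hasDerivAt_const t ω).div (hωt.sinh.const_mul 4)
      (mul_ne_zero four_ne_zero hs)).fun_neg.congr_deriv ?_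
    field_simp
    ring
  have hbracket := ((hωt.cosh.mul_const ((∑ i, x i ^ 2) + ∑ i, y i ^ 2)).sub_const
    (2 * ∑ i, x i * y i))
  refine (hcoef.mul hbracket).congr_deriv ?_
  field_simp
  linear_combination ω ^ 2 * ((∑ i, x i ^ 2) + ∑ i, y i ^ 2) * cosh_sq (ω * t)

lemma hasDerivAt_mehlerKernel {t : ℝ} (hω : ω ≠ 0) (hs : sinh (ω * t) ≠ 0) (x : Fin ν → ℝ) :
    HasDerivAt (fun t => mehlerKernel ω y t x)
      ((-(ν * ω * cosh (ω * t)) / (2 * sinh (ω * t))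
          + ω ^ 2 * ((∑ i, x i ^ 2) + (∑ i, y i ^ 2) - 2 * cosh (ω * t) * ∑ i, x i * y i)
            / (4 * sinh (ω * t) ^ 2))
        * mehlerKernel ω y t x) t := by
  have hωt : HasDerivAt (fun t => ω * t) ω t := by simpa using (hasDerivAt_id t).const_mul ω
  have hbase : 4 * π * sinh (ω * t) / ω ≠ 0 := by positivity
  have hpow := (((hωt.sinh.const_mul (4 * π)).div_const ω).rpow_const (p := -(ν : ℝ) / 2)
    (Or.inl hbase))
  refine (hpow.mul (hasDerivAt_mehlerExponent ω y hs x).exp).congr_deriv ?_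
  simp only [mehlerKernel, ← mul_assoc, rpow_sub_one hbase]
  field_simp

end Mehler

theorem stmt9_general (ν : ℕ) (ω : ℝ) (hω : 0 < ω) (y : Fin ν → ℝ)
    (u : ℝ → (Fin ν → ℝ) → ℝ)
    (hu : ∀ t : ℝ, ∀ x : Fin ν → ℝ,
      u t x = (4 * Real.pi * Real.sinh (ω * t) / ω) ^ (-(ν : ℝ) / 2) *
        Real.exp (-(ω / (4 * Real.sinh (ω * t))) *
          (Real.cosh (ω * t) * ((∑ i, x i ^ 2) + ∑ i, y i ^ 2) - 2 * ∑ i, x i * y i))) :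
    ∀ t : ℝ, 0 < t → ∀ x : Fin ν → ℝ,
      HasDerivAt (fun t' => u t' x)
        ((∑ i, iteratedDeriv 2 (fun z : ℝ => u t (Function.update x i z)) (x i))
          - ω ^ 2 / 4 * (∑ i, x i ^ 2) * u t x) t := by
  intro t ht x
  obtain rfl : u = mehlerKernel ω y := funext₂ hu
  have hs : sinh (ω * t) ≠ 0 := (sinh_pos_iff.2 (mul_pos hω ht)).ne'
  refine (hasDerivAt_mehlerKernel ω y hω.ne' hs x).congr_deriv ?_
  rw [laplacian_mehlerKernel]
  field_simp
  linear_combination -(4 * ω * mehlerKernel ω y t x * ∑ i, x i ^ 2) * cosh_sq (ω * t)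

/-- **Mehler's formula.** For `ω > 0`, `y ∈ ℝ^ν`, the function
`u_ω(t,x) = (4π sh(ωt)/ω)^{−ν/2} exp(−(ω/(4 sh(ωt)))(ch(ωt)(|x|²+|y|²) − 2x·y))`
satisfies `∂_t u_ω = Δ_x u_ω − (ω²/4)|x|² u_ω` for `t > 0`, `x ∈ ℝ^ν`. -/
theorem stmt9 (ν : ℕ) (hν : 1 ≤ ν) (ω : ℝ) (hω : 0 < ω) (y : Fin ν → ℝ)
    (u : ℝ → (Fin ν → ℝ) → ℝ)
    (hu : ∀ t : ℝ, ∀ x : Fin ν → ℝ,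
      u t x = (4 * Real.pi * Real.sinh (ω * t) / ω) ^ (-(ν : ℝ) / 2) *
        Real.exp (-(ω / (4 * Real.sinh (ω * t))) *
          (Real.cosh (ω * t) * ((∑ i, x i ^ 2) + ∑ i, y i ^ 2) - 2 * ∑ i, x i * y i))) :
    ∀ t : ℝ, 0 < t → ∀ x : Fin ν → ℝ,
      HasDerivAt (fun t' => u t' x)
        ((∑ i, iteratedDeriv 2 (fun z : ℝ => u t (Function.update x i z)) (x i))
          - ω ^ 2 / 4 * (∑ i, x i ^ 2) * u t x) t :=
  stmt9_general ν ω hω y u hu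
end

section
/- Let ν ≥ 1, ω ∈ (ℝ ∪ iℝ) ∖ {0}, let δ > 0 be such that |q_ω(s)| ≤ 4 max(|x|,|y|) whenever 0 < |ωt| < δ, s ∈ [0,1], x, y ∈ ℂ^ν, and let T_d > 0 be such that Re(Ω·ξ⊗ξ) ≥ 0 whenever Re t ≥ 0, 0 < |t| < T_d. Let R > 0 and let μ be a complex measure on ℝ^ν with A := ∫_{ℝ^ν} e^{4R|ξ|} d|μ|(ξ) < ∞. Set T_c := min(T_d, δ/|ω|). Then for every n ≥ 1, every t ∈ ℂ with Re t > 0 and |t| < T_c, and every x, y ∈ ℂ^ν with |x| < R and |y| < R: (i) |e^{−Ω·ξ⊗ξ} e^{i q_ω^n(s)·ξ}| ≤ e^{4R(|ξ₁| + ⋯ + |ξ_n|)} for all 0 < s₁ < ⋯ < s_n < 1 and ξ ∈ ℝ^{νn}; (ii) the iterated integral v_n(t,x,y) := t^n ∫_{0<s₁<⋯<s_n<1} ∫_{ℝ^{νn}} e^{−Ω·ξ⊗ξ} e^{i q_ω^n(s)·ξ} dμ(ξ_n)⋯dμ(ξ₁) ds₁⋯ds_n converges absolutely and |v_n(t,x,y)|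 ≤ (|t|A)^n/n!. -/
open Finset MeasureTheory Complex

noncomputable section

/-- The open simplex `0 < s₁ < ⋯ < s_n < 1`. -/
def simplex01 (n : ℕ) : Set (Fin n → ℝ) :=
  {s | StrictMono s ∧ ∀ j, s j ∈ Set.Ioo (0 : ℝ) 1}

/-- Euclidean norm on `ℝ^ν`. -/
def eNorm {ν : ℕ} (ξ : Fin ν → ℝ) : ℝ := Real.sqrt (∑ i, ξ i ^ 2)

/-- Hermitian norm on `ℂ^ν`. -/
def hNorm {ν : ℕ} (x : Fin ν → ℂ) : ℝ := Real.sqrt (∑ i, ‖x i‖ ^ 2)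

/-- The quadratic form `Ω·ξ⊗ξ`. -/
def OmegaForm (ν n : ℕ) (ω t : ℂ) (s : Fin n → ℝ) (ξ : Fin n → Fin ν → ℝ) : ℂ :=
  ∑ j, ∑ k,
    Complex.sinh (ω * t * (s (min j k) : ℂ)) * Complex.sinh (ω * t * (1 - (s (max j k) : ℂ)))
      / (ω * Complex.sinh (ω * t)) * ((∑ i, ξ j i * ξ k i : ℝ) : ℂ)

/-- The path `q_ω(s) = (sh(ωts) x + sh(ωt(1−s)) y)/sh(ωt)`. -/
def qPath (ν : ℕ) (ω t : ℂ) (x y : Fin ν → ℂ) (s : ℝ) : Fin ν → ℂ := fun i =>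
  Complex.sinh (ω * t * (s : ℂ)) / Complex.sinh (ω * t) * x i
    + Complex.sinh (ω * t * (1 - (s : ℂ))) / Complex.sinh (ω * t) * y i

/-- `q_ω^n(s)·ξ = q_ω(s₁)·ξ₁ + ⋯ + q_ω(s_n)·ξ_n` (bilinear dot product). -/
def qDotn (ν n : ℕ) (ω t : ℂ) (x y : Fin ν → ℂ) (s : Fin n → ℝ) (ξ : Fin n → Fin ν → ℝ) : ℂ :=
  ∑ j, ∑ i, qPath ν ω t x y (s j) i * (ξ j i : ℂ)

/-- The integrand `e^{−Ω·ξ⊗ξ} e^{i q_ω^n(s)·ξ}` times the density `∏_j h(ξ_j)` of the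
complex measure `dμ = h d|μ|`. -/
def integrand10 (ν n : ℕ) (ω t : ℂ) (x y : Fin ν → ℂ) (h : (Fin ν → ℝ) → ℂ)
    (p : (Fin n → ℝ) × (Fin n → Fin ν → ℝ)) : ℂ :=
  Complex.exp (-(OmegaForm ν n ω t p.1 p.2)) * Complex.exp (Complex.I * qDotn ν n ω t x y p.1 p.2)
    * ∏ j, h (p.2 j)

/-! For `Re t ≥ 0` the bound on `Re Ω` makes `e^{−Ω·ξ⊗ξ}` a contraction, and the bound on `q_ω`
with Cauchy–Schwarz gives `|e^{i q·ξ}| ≤ e^{4R Σ|ξⱼ|}`; this is (i). As `|h| = 1`, the integrand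
of `v_n` is dominated by `∏ⱼ e^{4R|ξⱼ|}`, whose integral against `|μ|^{⊗n}` is `Aⁿ`, and the
simplex has volume at most `1/n!` since its `n!` images under permutations of the coordinates
are disjoint subsets of the unit cube. -/

open scoped ENNReal Nat

theorem Equiv.Perm.eq_of_strictMono_comp {ι α : Type*} [LinearOrder ι] [WellFoundedLT ι]
    [Preorder α] {s : ι → α} {σ τ : Equiv.Perm ι}
    (hσ : StrictMono (s ∘ σ)) (hτ : StrictMono (s ∘ τ)) : σ = τ := by
  have hrange : Set.range (s ∘ σ) = Set.range (s ∘ τ) := by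
    rw [Set.range_comp, Set.range_comp, σ.range_eq_univ, τ.range_eq_univ]
  have hcomp : s ∘ σ = s ∘ τ := (hσ.range_inj hτ).mp hrange
  have hs : Function.Injective s := by
    simpa [Function.comp_assoc] using hσ.injective.comp σ.symm.injective
  exact Equiv.ext fun j => hs (congrFun hcomp j)

theorem volume_preimage_comp_perm {ι : Type*} [Fintype ι] (σ : Equiv.Perm ι) (S : Set (ι → ℝ)) :
    volume ((· ∘ σ) ⁻¹' S) = volume S := by
  have hcoe : ⇑(MeasurableEquiv.piCongrLeft (fun _ : ι => ℝ) σ.symm) = (· ∘ σ) := by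
    ext s j
    simp [MeasurableEquiv.coe_piCongrLeft, Equiv.piCongrLeft_apply]
  rw [← hcoe]
  exact (volume_measurePreserving_piCongrLeft (fun _ => ℝ) σ.symm).measure_preimage_equiv S

theorem measurableSet_simplex01 (n : ℕ) : MeasurableSet (simplex01 n) := by
  have hset : simplex01 n = (⋂ i, ⋂ j, {s : Fin n → ℝ | i < j → s i < s j}) ∩
      ⋂ j, (fun s => s j) ⁻¹' Set.Ioo 0 1 := by
    ext s
    simp [simplex01, StrictMono]
  rw [hset]
  refine .inter (.iInter fun i => .iInter fun j => ?_)
    (.iInter fun j => measurable_pi_apply j measurableSet_Ioo)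
  by_cases hij : i < j
  · simpa [hij] using measurableSet_lt (measurable_pi_apply i) (measurable_pi_apply j)
  · simp [hij]

/-- The `n!` sets `{s | s ∘ σ ∈ simplex01 n}` have the volume of the simplex, are pairwise
disjoint, and lie in the unit cube. -/
theorem factorial_mul_volume_simplex01_le_one (n : ℕ) :
    (n ! : ℝ≥0∞) * volume (simplex01 n) ≤ 1 := by
  let S : Equiv.Perm (Fin n) → Set (Fin n → ℝ) := fun σ => (· ∘ σ) ⁻¹' simplex01 n
  have hdisj : Pairwise (Function.onFun Disjoint S) := fun σ τ hne =>
    Set.disjoint_left.mpr fun _ hσ hτ => hne (Equiv.Perm.eq_of_strictMono_comp hσ.1 hτ.1)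
  have hmeas : ∀ σ, MeasurableSet (S σ) := fun σ =>
    (measurableSet_simplex01 n).preimage
      (measurable_pi_lambda _ fun j => measurable_pi_apply (σ j))
  have hcube : (⋃ σ, S σ) ⊆ Set.univ.pi fun _ => Set.Ioo (0 : ℝ) 1 := by
    simp only [Set.iUnion_subset_iff]
    intro σ s hs j _
    simpa using hs.2 (σ.symm j)
  calc (n ! : ℝ≥0∞) * volume (simplex01 n)
      = ∑ σ, volume (S σ) := by
        simp [S, volume_preimage_comp_perm, Fintype.card_perm]
    _ = volume (⋃ σ, S σ) := by rw [measure_iUnion hdisj hmeas, tsum_fintype]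
    _ ≤ volume (Set.univ.pi fun _ : Fin n => Set.Ioo (0 : ℝ) 1) := measure_mono hcube
    _ = 1 := by simp [volume_pi_pi]

theorem volume_simplex01_lt_top (n : ℕ) : volume (simplex01 n) < ∞ := by
  have hfac : (1 : ℝ≥0∞) ≤ n ! := by exact_mod_cast n.factorial_pos
  exact (le_mul_of_one_le_left zero_le hfac).trans_lt
    ((factorial_mul_volume_simplex01_le_one n).trans_lt ENNReal.one_lt_top)

instance isFiniteMeasure_volume_restrict_simplex01 (n : ℕ) :
    IsFiniteMeasure (volume.restrict (simplex01 n)) :=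
  isFiniteMeasure_restrict.mpr (volume_simplex01_lt_top n).ne

theorem volume_real_simplex01_le (n : ℕ) : volume.real (simplex01 n) ≤ 1 / n ! := by
  have h := ENNReal.toReal_mono ENNReal.one_ne_top (factorial_mul_volume_simplex01_le_one n)
  rw [ENNReal.toReal_mul, ENNReal.toReal_natCast, ENNReal.toReal_one] at h
  rw [le_div_iff₀ (by positivity), mul_comm]
  exact h

theorem norm_sum_mul_le_hNorm_mul_eNorm {ν : ℕ} (z : Fin ν → ℂ) (ξ : Fin ν → ℝ) :
    ‖∑ i, z i * (ξ i : ℂ)‖ ≤ hNorm z * eNorm ξ :=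
  calc ‖∑ i, z i * (ξ i : ℂ)‖
      ≤ ∑ i, ‖z i‖ * |ξ i| := by
        refine (norm_sum_le _ _).trans_eq ?_
        simp only [norm_mul, Complex.norm_real, Real.norm_eq_abs]
    _ ≤ Real.sqrt (∑ i, ‖z i‖ ^ 2) * Real.sqrt (∑ i, |ξ i| ^ 2) :=
        Real.sum_mul_le_sqrt_mul_sqrt _ _ _
    _ = hNorm z * eNorm ξ := by simp only [hNorm, eNorm, sq_abs]

theorem norm_qDotn_le {ν n : ℕ} {ω t : ℂ} {x y : Fin ν → ℂ} {s : Fin n → ℝ} {C : ℝ}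
    (hC : ∀ j, hNorm (qPath ν ω t x y (s j)) ≤ C) (ξ : Fin n → Fin ν → ℝ) :
    ‖qDotn ν n ω t x y s ξ‖ ≤ C * ∑ j, eNorm (ξ j) := by
  rw [Finset.mul_sum]
  refine (norm_sum_le _ _).trans (Finset.sum_le_sum fun j _ => ?_)
  exact (norm_sum_mul_le_hNorm_mul_eNorm _ _).trans
    (mul_le_mul_of_nonneg_right (hC j) (Real.sqrt_nonneg _))

theorem norm_exp_neg_mul_exp_I_mul_le {a b : ℂ} {B : ℝ} (ha : 0 ≤ a.re) (hb : ‖b‖ ≤ B) :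
    ‖Complex.exp (-a) * Complex.exp (Complex.I * b)‖ ≤ Real.exp B := by
  rw [norm_mul, Complex.norm_exp, Complex.norm_exp, ← Real.exp_add, Real.exp_le_exp]
  have hIb : (Complex.I * b).re = -b.im := by simp
  have hbim : -b.im ≤ ‖b‖ := (neg_le_abs _).trans (Complex.abs_im_le_norm _)
  rw [Complex.neg_re, hIb]
  linarith

theorem measurable_integrand10 (ν n : ℕ) (ω t : ℂ) (x y : Fin ν → ℂ) {h : (Fin ν → ℝ) → ℂ}
    (hh : Measurable h) : Measurable (integrand10 ν n ω t x y h) := by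
  unfold integrand10 OmegaForm qDotn qPath
  fun_prop

section DominatedByProduct

variable {X E F : Type*} [MeasurableSpace X] [MeasurableSpace E] [NormedAddCommGroup F]
  {κ : Measure X} [IsFiniteMeasure κ] {μ : Measure E} [SigmaFinite μ] {n : ℕ}
  {f : X × (Fin n → E) → F} {g : E → ℝ}

theorem integrable_prod_pi_of_norm_le_prod
    (hf : AEStronglyMeasurable f (κ.prod (Measure.pi fun _ => μ))) (hg : Integrable g μ)
    (hfg : ∀ᵐ p ∂κ.prod (Measure.pi fun _ => μ), ‖f p‖ ≤ ∏ j, g (p.2 j)) :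
    Integrable f (κ.prod (Measure.pi fun _ => μ)) :=
  ((Integrable.fintype_prod fun _ => hg).comp_snd κ).mono' hf hfg

theorem norm_integral_prod_pi_le_of_norm_le_prod [NormedSpace ℝ F] (hg : Integrable g μ)
    (hfg : ∀ᵐ p ∂κ.prod (Measure.pi fun _ => μ), ‖f p‖ ≤ ∏ j, g (p.2 j)) :
    ‖∫ p, f p ∂κ.prod (Measure.pi fun _ => μ)‖ ≤ κ.real Set.univ * (∫ z, g z ∂μ) ^ n := by
  have hG := (Integrable.fintype_prod fun _ : Fin n => hg).comp_snd κ
  refine (norm_integral_le_of_norm_le hG hfg).trans_eq ?_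
  rw [integral_fun_snd (fun ξ : Fin n → E => ∏ j, g (ξ j)), integral_fintype_prod_eq_pow,
    Fintype.card_fin, smul_eq_mul]

end DominatedByProduct

theorem norm_integrand10 {ν n : ℕ} {ω t : ℂ} {x y : Fin ν → ℂ} {h : (Fin ν → ℝ) → ℂ}
    (hone : ∀ ξ, ‖h ξ‖ = 1) (p : (Fin n → ℝ) × (Fin n → Fin ν → ℝ)) :
    ‖integrand10 ν n ω t x y h p‖ =
      ‖Complex.exp (-(OmegaForm ν n ω t p.1 p.2)) *
        Complex.exp (Complex.I * qDotn ν n ω t x y p.1 p.2)‖ := by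
  rw [integrand10, norm_mul _ (∏ j, h (p.2 j)), norm_prod]
  simp [hone]

theorem stmt10_general (ν : ℕ) (ω : ℂ) (hω0 : ω ≠ 0)
    (δ : ℝ)
    (hδ : ∀ (t : ℂ) (s : ℝ) (x y : Fin ν → ℂ), 0 < ‖ω * t‖ → ‖ω * t‖ < δ →
      s ∈ Set.Icc (0 : ℝ) 1 → hNorm (qPath ν ω t x y s) ≤ 4 * max (hNorm x) (hNorm y))
    (Td : ℝ)
    (hTd : ∀ n : ℕ, 1 ≤ n → ∀ s ∈ simplex01 n, ∀ (ξ : Fin n → Fin ν → ℝ) (t : ℂ),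
      0 < ‖t‖ → ‖t‖ < Td → 0 ≤ t.re → 0 ≤ (OmegaForm ν n ω t s ξ).re)
    (R : ℝ)
    (μP : Measure (Fin ν → ℝ)) [IsFiniteMeasure μP]
    (h : (Fin ν → ℝ) → ℂ) (hmeas : Measurable h) (hone : ∀ ξ, ‖h ξ‖ = 1)
    (hint : Integrable (fun ξ => Real.exp (4 * R * eNorm ξ)) μP)
    (A : ℝ) (hA : A = ∫ ξ, Real.exp (4 * R * eNorm ξ) ∂μP)
    (n : ℕ) (hn : 1 ≤ n) (t : ℂ) (ht : 0 < t.re) (htT : ‖t‖ < min Td (δ / ‖ω‖))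
    (x y : Fin ν → ℂ) (hx : hNorm x < R) (hy : hNorm y < R) :
    (∀ s ∈ simplex01 n, ∀ ξ : Fin n → Fin ν → ℝ,
      ‖Complex.exp (-(OmegaForm ν n ω t s ξ)) * Complex.exp (Complex.I * qDotn ν n ω t x y s ξ)‖
        ≤ Real.exp (4 * R * ∑ j, eNorm (ξ j))) ∧
    Integrable (integrand10 ν n ω t x y h)
      (((volume : Measure (Fin n → ℝ)).restrict (simplex01 n)).prod
        (Measure.pi fun _ : Fin n => μP)) ∧
    ‖t ^ n * ∫ p, integrand10 ν n ω t x y h p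
        ∂(((volume : Measure (Fin n → ℝ)).restrict (simplex01 n)).prod
          (Measure.pi fun _ : Fin n => μP))‖
      ≤ (‖t‖ * A) ^ n / n.factorial := by
  obtain ⟨htTd, htδ⟩ := lt_min_iff.mp htT
  have htpos : 0 < ‖t‖ := norm_pos_iff.mpr fun h0 => by simp [h0] at ht
  have hωt : 0 < ‖ω * t‖ := norm_pos_iff.mpr (mul_ne_zero hω0 (norm_pos_iff.mp htpos))
  have hωtδ : ‖ω * t‖ < δ := by rwa [norm_mul, ← lt_div_iff₀' (norm_pos_iff.mpr hω0)]
  have hq : ∀ s ∈ simplex01 n, ∀ j, hNorm (qPath ν ω t x y (s j)) ≤ 4 * R := fun s hs j =>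
    (hδ t (s j) x y hωt hωtδ (Set.Ioo_subset_Icc_self (hs.2 j))).trans (by linarith [max_lt hx hy])
  have hbound : ∀ s ∈ simplex01 n, ∀ ξ : Fin n → Fin ν → ℝ,
      ‖Complex.exp (-(OmegaForm ν n ω t s ξ)) * Complex.exp (Complex.I * qDotn ν n ω t x y s ξ)‖
        ≤ Real.exp (4 * R * ∑ j, eNorm (ξ j)) := fun s hs ξ =>
    norm_exp_neg_mul_exp_I_mul_le (hTd n hn s hs ξ t htpos htTd ht.le) (norm_qDotn_le (hq s hs) ξ)
  have hdom : ∀ᵐ p ∂((volume : Measure (Fin n → ℝ)).restrict (simplex01 n)).prod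
      (Measure.pi fun _ : Fin n => μP),
      ‖integrand10 ν n ω t x y h p‖ ≤ ∏ j, Real.exp (4 * R * eNorm (p.2 j)) := by
    filter_upwards [Measure.quasiMeasurePreserving_fst.ae
      (ae_restrict_mem (measurableSet_simplex01 n))] with p hp
    rw [norm_integrand10 hone, ← Real.exp_sum, ← Finset.mul_sum]
    exact hbound p.1 hp p.2
  refine ⟨hbound, integrable_prod_pi_of_norm_le_prod
    (measurable_integrand10 ν n ω t x y hmeas).aestronglyMeasurable hint hdom, ?_⟩
  have hA0 : 0 ≤ A := hA ▸ integral_nonneg fun ξ => (Real.exp_pos _).le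
  calc ‖t ^ n * ∫ p, integrand10 ν n ω t x y h p
        ∂((volume : Measure (Fin n → ℝ)).restrict (simplex01 n)).prod
          (Measure.pi fun _ : Fin n => μP)‖
      ≤ ‖t‖ ^ n * (volume.real (simplex01 n) * A ^ n) := by
        rw [norm_mul, norm_pow, hA, ← measureReal_restrict_apply_univ]
        gcongr
        exact norm_integral_prod_pi_le_of_norm_le_prod hint hdom
    _ ≤ ‖t‖ ^ n * (1 / n.factorial * A ^ n) := by gcongr; exact volume_real_simplex01_le n
    _ = (‖t‖ * A) ^ n / n.factorial := by ring

/-- Under the stated bounds on the path `q_ω` (constant `δ`) and on the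
real part of the deformation form `Ω` (constant `T_d`), for a complex measure
`dμ = h d|μ|` (with `|h| = 1` and `|μ| = μP` finite) with `A = ∫ e^{4R|ξ|} d|μ| < ∞`,
for every `n ≥ 1`, `t` with `Re t > 0`, `|t| < T_c = min(T_d, δ/|ω|)`, and `|x|, |y| < R`:
(i) the integrand is bounded by `e^{4R(|ξ₁|+⋯+|ξ_n|)}`; (ii) the iterated integral
defining `v_n` converges absolutely and `|v_n(t,x,y)| ≤ (|t|A)^n/n!`. -/
theorem stmt10 (ν : ℕ) (hν : 1 ≤ ν) (ω : ℂ) (hω : ω.im = 0 ∨ ω.re = 0) (hω0 : ω ≠ 0)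
    (δ : ℝ) (hδpos : 0 < δ)
    (hδ : ∀ (t : ℂ) (s : ℝ) (x y : Fin ν → ℂ), 0 < ‖ω * t‖ → ‖ω * t‖ < δ →
      s ∈ Set.Icc (0 : ℝ) 1 → hNorm (qPath ν ω t x y s) ≤ 4 * max (hNorm x) (hNorm y))
    (Td : ℝ) (hTdpos : 0 < Td)
    (hTd : ∀ n : ℕ, 1 ≤ n → ∀ s ∈ simplex01 n, ∀ (ξ : Fin n → Fin ν → ℝ) (t : ℂ),
      0 < ‖t‖ → ‖t‖ < Td → 0 ≤ t.re → 0 ≤ (OmegaForm ν n ω t s ξ).re)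
    (R : ℝ) (hR : 0 < R)
    (μP : Measure (Fin ν → ℝ)) [IsFiniteMeasure μP]
    (h : (Fin ν → ℝ) → ℂ) (hmeas : Measurable h) (hone : ∀ ξ, ‖h ξ‖ = 1)
    (hint : Integrable (fun ξ => Real.exp (4 * R * eNorm ξ)) μP)
    (A : ℝ) (hA : A = ∫ ξ, Real.exp (4 * R * eNorm ξ) ∂μP)
    (n : ℕ) (hn : 1 ≤ n) (t : ℂ) (ht : 0 < t.re) (htT : ‖t‖ < min Td (δ / ‖ω‖))
    (x y : Fin ν → ℂ) (hx : hNorm x < R) (hy : hNorm y < R) :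
    (∀ s ∈ simplex01 n, ∀ ξ : Fin n → Fin ν → ℝ,
      ‖Complex.exp (-(OmegaForm ν n ω t s ξ)) * Complex.exp (Complex.I * qDotn ν n ω t x y s ξ)‖
        ≤ Real.exp (4 * R * ∑ j, eNorm (ξ j))) ∧
    Integrable (integrand10 ν n ω t x y h)
      (((volume : Measure (Fin n → ℝ)).restrict (simplex01 n)).prod
        (Measure.pi fun _ : Fin n => μP)) ∧
    ‖t ^ n * ∫ p, integrand10 ν n ω t x y h p
        ∂(((volume : Measure (Fin n → ℝ)).restrict (simplex01 n)).prod
          (Measure.pi fun _ : Fin n => μP))‖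
      ≤ (‖t‖ * A) ^ n / n.factorial :=
  stmt10_general ν ω hω0 δ hδ Td hTd R μP h hmeas hone hint A hA n hn t ht htT x y hx hy
end
end

section
/- For every z ∈ ℂ, |J(z)| ≤ exp(2 |Im(z^{1/2})|), where J(z) := Σ_{n≥0} (−1)^n z^n/(n!)². -/
/-!
With `w = z^{1/2}`, so that `w² = z`, the series is Bessel's integral
`J(w²) = (2π)⁻¹ ∫₀^{2π} exp(2iw cos θ) dθ`: write `exp(2iw cos θ) = exp(iw e^{iθ}) exp(iw e^{-iθ})`,
expand both factors, and integrate the double series term by term; the term of bidegree `(j, k)`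
carries `e^{i(j-k)θ}`, so only the diagonal `j = k` survives. The integrand has modulus
`exp(-2 cos θ Im w) ≤ exp(2 |Im w|)`.
-/

open Complex
open scoped Real Nat

lemma integral_exp_int_mul_mul_I (k : ℤ) :
    ∫ θ in (0 : ℝ)..2 * π, exp (k * θ * I) = if k = 0 then (2 * π : ℂ) else 0 := by
  split_ifs with hk
  · simp [hk]
  · have hkI : (k : ℂ) * I ≠ 0 := by simp [hk, I_ne_zero]
    simp_rw [mul_right_comm (k : ℂ) _ I]
    rw [integral_exp_mul_complex hkI, div_eq_zero_iff, sub_eq_zero]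
    left
    push_cast
    rw [show (k : ℂ) * I * (2 * π) = k * (2 * π * I) by ring, exp_int_mul_two_pi_mul_I]
    simp

lemma hasSum_pow_div_factorial_mul_pow_div_factorial (a b : ℂ) :
    HasSum (fun p : ℕ × ℕ => a ^ p.1 / p.1 ! * (b ^ p.2 / p.2 !)) (exp a * exp b) := by
  have hexp (c : ℂ) : HasSum (fun n => c ^ n / (n ! : ℂ)) (exp c) := by
    rw [exp_eq_exp_ℂ]; exact NormedSpace.expSeries_div_hasSum_exp c
  have hnorm (c : ℂ) : Summable fun n => ‖c ^ n / (n ! : ℂ)‖ := by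
    refine (Real.summable_pow_div_factorial ‖c‖).congr fun n => ?_
    rw [norm_div, norm_pow, norm_natCast]
  have hprod := summable_mul_of_summable_norm (hnorm a) (hnorm b)
  exact ((hexp a).mul (hexp b) hprod :)

noncomputable def expCosTerm (w : ℂ) (θ : ℝ) (p : ℕ × ℕ) : ℂ :=
  (I * w * exp (θ * I)) ^ p.1 / p.1 ! * ((I * w * exp (-θ * I)) ^ p.2 / p.2 !)

lemma expCosTerm_eq (w : ℂ) (θ : ℝ) (j k : ℕ) :
    expCosTerm w θ (j, k) = (I * w) ^ (j + k) / (j ! * k !) * exp (((j : ℤ) - k : ℤ) * θ * I) := by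
  have hexp : exp (θ * I) ^ j * exp (-θ * I) ^ k = exp (((j : ℤ) - k : ℤ) * θ * I) := by
    rw [← exp_nat_mul, ← exp_nat_mul, ← exp_add]
    push_cast
    ring_nf
  rw [expCosTerm, mul_pow, mul_pow, ← hexp, pow_add]
  ring

lemma integral_expCosTerm (w : ℂ) (j k : ℕ) :
    ∫ θ in (0 : ℝ)..2 * π, expCosTerm w θ (j, k)
      = if j = k then 2 * π * ((-1) ^ j * (w ^ 2) ^ j / (j ! : ℂ) ^ 2) else 0 := by
  simp_rw [expCosTerm_eq, intervalIntegral.integral_const_mul,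
    integral_exp_int_mul_mul_I, sub_eq_zero, Nat.cast_inj]
  split_ifs with hjk
  · subst hjk
    rw [← two_mul, pow_mul, mul_pow, I_sq]
    ring
  · simp

lemma hasSum_integral_expCosTerm (w : ℂ) :
    HasSum (fun p : ℕ × ℕ => ∫ θ in (0 : ℝ)..2 * π, expCosTerm w θ p)
      (∫ θ in (0 : ℝ)..2 * π, exp (I * w * (2 * cos θ))) := by
  refine intervalIntegral.hasSum_integral_of_dominated_convergence
    (fun p _ => ‖w‖ ^ p.1 / p.1 ! * (‖w‖ ^ p.2 / p.2 !)) (fun p => by unfold expCosTerm; fun_prop)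
    (fun p => .of_forall fun θ _ => le_of_eq ?_) (.of_forall fun θ _ => ?_)
    intervalIntegrable_const (.of_forall fun θ _ => ?_)
  · simp [expCosTerm, norm_exp]
  · exact (Real.summable_pow_div_factorial _).mul_of_nonneg (Real.summable_pow_div_factorial _)
      (fun n => by positivity) (fun n => by positivity)
  · rw [two_cos, mul_add, exp_add]
    exact hasSum_pow_div_factorial_mul_pow_div_factorial _ _

lemma hasSum_integral_exp_mul_cos (w : ℂ) :
    HasSum (fun n : ℕ => 2 * π * ((-1) ^ n * (w ^ 2) ^ n / (n ! : ℂ) ^ 2))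
      (∫ θ in (0 : ℝ)..2 * π, exp (I * w * (2 * cos θ))) := by
  have h := hasSum_integral_expCosTerm w
  simp_rw [integral_expCosTerm] at h
  have hdiag : Function.Injective fun n : ℕ => (n, n) := fun m n hmn => (Prod.ext_iff.1 hmn).1
  rw [← hdiag.hasSum_iff] at h
  · simpa [Function.comp_def] using h
  · rintro ⟨j, k⟩ hjk
    exact if_neg fun hj => hjk ⟨j, Prod.ext rfl hj⟩

lemma norm_exp_mul_cos_le (w : ℂ) (θ : ℝ) :
    ‖exp (I * w * (2 * cos θ))‖ ≤ Real.exp (2 * |w.im|) := by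
  rw [← ofReal_cos, norm_exp, Real.exp_le_exp]
  have hre : (I * w * (2 * (Real.cos θ : ℂ))).re = -(2 * Real.cos θ * w.im) := by
    simp only [mul_re, mul_im, I_re, I_im, ofReal_re, ofReal_im, re_ofNat, im_ofNat]
    ring
  calc (I * w * (2 * (Real.cos θ : ℂ))).re
      ≤ |2 * Real.cos θ * w.im| := hre ▸ neg_le_abs _
    _ = 2 * |Real.cos θ| * |w.im| := by rw [abs_mul, abs_mul, abs_two]
    _ ≤ 2 * 1 * |w.im| := by gcongr; exact Real.abs_cos_le_one θ
    _ = 2 * |w.im| := by ring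

lemma norm_tsum_neg_one_pow_mul_sq_pow_div_le (w : ℂ) :
    ‖∑' n : ℕ, (-1) ^ n * (w ^ 2) ^ n / (n ! : ℂ) ^ 2‖ ≤ Real.exp (2 * |w.im|) := by
  have hint := intervalIntegral.norm_integral_le_of_norm_le_const
    (a := 0) (b := 2 * π) fun θ _ => norm_exp_mul_cos_le w θ
  rw [← (hasSum_integral_exp_mul_cos w).tsum_eq, tsum_mul_left, norm_mul, sub_zero,
    abs_of_pos Real.two_pi_pos, mul_comm (Real.exp _)] at hint
  refine le_of_mul_le_mul_left (a := 2 * π) ?_ Real.two_pi_pos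
  simpa [abs_of_pos Real.pi_pos] using hint

/-- For every `z ∈ ℂ`, `|J(z)| ≤ exp(2 |Im(z^{1/2})|)`, where
`J(z) = ∑_{n≥0} (−1)^n z^n/(n!)²` and `z^{1/2}` is the principal square root. -/
theorem stmt13 (z : ℂ) :
    ‖∑' n : ℕ, (-1) ^ n * z ^ n / ((n.factorial : ℂ)) ^ 2‖
      ≤ Real.exp (2 * |(z ^ ((1 : ℂ) / 2)).im|) := by
  have hsq : (z ^ ((1 : ℂ) / 2)) ^ 2 = z := by
    rw [one_div, cpow_ofNat_inv_pow]
  simpa [hsq] using norm_tsum_neg_one_pow_mul_sq_pow_div_le (z ^ ((1 : ℂ) / 2))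
end
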